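/- arXiv:1602.00830 — 2 statements merged into one kernel-verified Lean document; each statement's English description precedes it below -/
import Mathlib

section
/- Let A₁ (size M×M₁), B₁ (M₁×M), A₂ (M×M₂), B₂ (M₂×M) be continuous matrix-valued functions on [0,1]². Then the composition (A₁⟨B₁·⟩₁) ∘ (A₂⟨B₂·⟩₂) of the two bounded operators u ↦ A₁⟨B₁u⟩₁ and u ↦ A₂⟨B₂u⟩₂ on H = L²([0,1]², ℂ^M) equals the integral operator u ↦ ∫_{[0,1]²} D(k,k') u(k') dk' with the continuous M×M matrix kernel D(k,k') = A₁(k) B₁(k₁',k₂) A₂(k₁',k₂) B₂(k'), where k = (k₁,k₂) and k' = (k₁',k₂'); in particular this composition is a compact operator on H. -/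
/-!
Substituting the formula for `T₂ u` into that for `T₁` and exchanging the two partial integrals
by Fubini turns `T₁ ∘ T₂` into the integral operator with the continuous kernel `D`.
An integral operator `u ↦ ∫ K (·, y) (u y) dy` with a continuous kernel on compact spaces sends the
unit ball of `Lp` to a uniformly bounded family of continuous functions which is equicontinuous,
because `x ↦ K (x, ·)` is continuous into the sup-normed space `C(Y, E →L F)`; by Arzelà–Ascoli
this family is relatively compact in `C(X, F)`, hence also in `Lp`.
-/

open MeasureTheory Set

noncomputable section

/-- The unit interval `[0,1]` equipped with Lebesgue measure. -/
abbrev I01 : Set ℝ := Set.Icc 0 1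

/-- The unit square `[0,1]²`. -/
abbrev Box : Type := I01 × I01

/-- The space `ℂ^M`. -/
abbrev EucM (M : ℕ) := EuclideanSpace ℂ (Fin M)

/-- The Hilbert space `H = L²([0,1]², ℂ^M)`. -/
abbrev HS (M : ℕ) := Lp (E := EucM M) 2 (volume : Measure Box)

/-- Reinterpret a plain vector in `Fin M → ℂ` as an element of `ℂ^M` (the identity map). -/
abbrev toEuc (M : ℕ) (x : Fin M → ℂ) : EucM M := (WithLp.equiv 2 (Fin M → ℂ)).symm x

open scoped BoundedContinuousFunction

section ContinuousOperatorField

variable {𝕜 Y E F : Type*} [NontriviallyNormedField 𝕜]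
  [NormedAddCommGroup E] [NormedSpace 𝕜 E] [NormedAddCommGroup F] [NormedSpace 𝕜 F]
  [MeasurableSpace Y] {ν : Measure Y} {u : Y → E}

theorem norm_integral_clm_apply_le [NormedSpace ℝ F] {g : Y → E →L[𝕜] F} {C : ℝ}
    (hg : ∀ y, ‖g y‖ ≤ C) (hu : Integrable u ν) :
    ‖∫ y, g y (u y) ∂ν‖ ≤ C * ∫ y, ‖u y‖ ∂ν := by
  rw [← integral_const_mul]
  exact norm_integral_le_of_norm_le (hu.norm.const_mul C)
    (.of_forall fun y => (g y).le_of_opNorm_le (hg y) (u y))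

variable [TopologicalSpace Y] [CompactSpace Y] [OpensMeasurableSpace Y]

theorem MeasureTheory.Integrable.continuousMap_clm_apply (g : C(Y, E →L[𝕜] F))
    (hu : Integrable u ν) :
    Integrable (fun y => g y (u y)) ν :=
  (hu.norm.const_mul ‖g‖).mono'
    ((ContinuousLinearMap.id 𝕜 _).aestronglyMeasurable_comp₂
      g.continuous.aestronglyMeasurable_of_compactSpace hu.aestronglyMeasurable)
    (.of_forall fun y => (g y).le_of_opNorm_le (g.norm_coe_le_norm y) (u y))

theorem lipschitzWith_integral_continuousMap_clm_apply [NormedSpace ℝ F] (hu : Integrable u ν) :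
    LipschitzWith (∫ y, ‖u y‖ ∂ν).toNNReal
      (fun g : C(Y, E →L[𝕜] F) => ∫ y, g y (u y) ∂ν) := by
  refine LipschitzWith.of_dist_le_mul fun g g' => ?_
  rw [Real.coe_toNNReal _ (integral_nonneg fun _ => norm_nonneg _), dist_eq_norm,
    dist_eq_norm g g', mul_comm,
    ← integral_sub (hu.continuousMap_clm_apply g) (hu.continuousMap_clm_apply g')]
  exact norm_integral_clm_apply_le (fun y => (g - g').norm_coe_le_norm y) hu

end ContinuousOperatorField

section LpToL1

variable {Y E : Type*} [MeasurableSpace Y] {ν : Measure Y} [IsFiniteMeasure ν]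
  [NormedAddCommGroup E] {p : ENNReal} [hp : Fact (1 ≤ p)]

theorem MeasureTheory.Lp.integral_norm_le (u : Lp E p ν) :
    ∫ y, ‖u y‖ ∂ν ≤ (ν univ ^ (1 - 1 / p.toReal)).toReal * ‖u‖ := by
  have hexp : 0 ≤ 1 - 1 / p.toReal := by
    rcases eq_or_ne p ⊤ with rfl | hp_top
    · simp
    · have : 1 ≤ p.toReal := by
        simpa using ENNReal.toReal_mono hp_top hp.out
      exact sub_nonneg.2 (div_le_one_of_le₀ this (by linarith))
  have hle := eLpNorm_le_eLpNorm_mul_rpow_measure_univ hp.out (Lp.aestronglyMeasurable u)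
  rw [ENNReal.toReal_one, div_one] at hle
  rw [integral_norm_eq_lintegral_enorm (Lp.aestronglyMeasurable u),
    ← eLpNorm_one_eq_lintegral_enorm, Lp.norm_def, mul_comm, ← ENNReal.toReal_mul]
  exact ENNReal.toReal_mono (ENNReal.mul_ne_top (Lp.eLpNorm_ne_top u)
    (ENNReal.rpow_ne_top_of_nonneg hexp (measure_ne_top ν univ))) hle

theorem MeasureTheory.Lp.integral_norm_le_of_mem_closedBall {u : Lp E p ν}
    (hu : u ∈ Metric.closedBall 0 1) :
    ∫ y, ‖u y‖ ∂ν ≤ (ν univ ^ (1 - 1 / p.toReal)).toReal :=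
  (Lp.integral_norm_le u).trans
    (mul_le_of_le_one_right ENNReal.toReal_nonneg (mem_closedBall_zero_iff.1 hu))

end LpToL1

section KernelOperator

variable {𝕜 X Y E F : Type*} [NontriviallyNormedField 𝕜]
  [NormedAddCommGroup E] [NormedSpace 𝕜 E]
  [NormedAddCommGroup F] [NormedSpace 𝕜 F] [NormedSpace ℝ F]
  [TopologicalSpace X] [CompactSpace X]
  [TopologicalSpace Y] [CompactSpace Y] [MeasurableSpace Y] [OpensMeasurableSpace Y]
  {ν : Measure Y} [IsFiniteMeasure ν] {p : ENNReal} [Fact (1 ≤ p)]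

def kernelIntegral (K : C(X × Y, E →L[𝕜] F)) (u : Lp E p ν) : X →ᵇ F :=
  .mkOfCompact ⟨fun x => ∫ y, K.curry x y (u y) ∂ν,
    (lipschitzWith_integral_continuousMap_clm_apply (𝕜 := 𝕜) (F := F)
      ((Lp.memLp u).integrable Fact.out)).continuous.comp K.curry.continuous⟩

theorem norm_kernelIntegral_apply_le (K : C(X × Y, E →L[𝕜] F)) (u : Lp E p ν) (x : X) :
    ‖kernelIntegral K u x‖ ≤ ‖K‖ * ∫ y, ‖u y‖ ∂ν :=
  norm_integral_clm_apply_le (fun y => K.norm_coe_le_norm (x, y))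
    ((Lp.memLp u).integrable Fact.out)

theorem equicontinuous_kernelIntegral_image_closedBall (K : C(X × Y, E →L[𝕜] F)) :
    Equicontinuous ((↑) : kernelIntegral K '' Metric.closedBall (0 : Lp E p ν) 1 → X → F) := by
  intro x₀
  set c := (ν univ ^ (1 - 1 / p.toReal)).toReal
  rw [Metric.equicontinuousAt_iff_right]
  intro ε hε
  have hc : 0 < c + 1 := by positivity
  filter_upwards [(Metric.tendsto_nhds (α := C(Y, E →L[𝕜] F))).1
    (K.curry.continuous.tendsto x₀) (ε / (c + 1)) (div_pos hε hc)] with x hx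
  rintro ⟨_, u, hu, rfl⟩
  have hu1 := Lp.integral_norm_le_of_mem_closedBall hu
  calc dist (kernelIntegral K u x₀) (kernelIntegral K u x)
      ≤ (∫ y, ‖u y‖ ∂ν).toNNReal * dist (K.curry x₀) (K.curry x) :=
        (lipschitzWith_integral_continuousMap_clm_apply
          ((Lp.memLp u).integrable Fact.out)).dist_le_mul _ _
    _ ≤ c * (ε / (c + 1)) := by
        rw [Real.coe_toNNReal _ (integral_nonneg fun _ => norm_nonneg _), dist_comm]
        gcongr
    _ < ε := by
        rw [mul_div_assoc', div_lt_iff₀ hc]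
        nlinarith

theorem isCompactOperator_of_ae_eq_integral_kernel [ProperSpace F]
    [MeasurableSpace X] [BorelSpace X] {μ : Measure X} [IsFiniteMeasure μ]
    {q : ENNReal} [Fact (1 ≤ q)] (K : C(X × Y, E →L[𝕜] F)) (T : Lp E p ν → Lp F q μ)
    (hT : ∀ u, ∀ᵐ x ∂μ, T u x = ∫ y, K (x, y) (u y) ∂ν) :
    IsCompactOperator T := by
  set A := kernelIntegral K '' Metric.closedBall (0 : Lp E p ν) 1
  have hA : IsCompact (closure A) := by
    refine BoundedContinuousFunction.arzela_ascoli
      (Metric.closedBall 0 (‖K‖ * (ν univ ^ (1 - 1 / p.toReal)).toReal))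
      (isCompact_closedBall _ _) A ?_ (equicontinuous_kernelIntegral_image_closedBall K)
    rintro _ x ⟨u, hu, rfl⟩
    simpa using (norm_kernelIntegral_apply_le K u x).trans
      (mul_le_mul_of_nonneg_left (Lp.integral_norm_le_of_mem_closedBall hu) (norm_nonneg K))
  have hT_eq : ∀ u, T u = BoundedContinuousFunction.toLp q μ ℝ (kernelIntegral K u) := by
    intro u
    refine Lp.ext ?_
    filter_upwards [hT u, BoundedContinuousFunction.coeFn_toLp q μ ℝ (kernelIntegral K u)]
      with x hx hx'
    rw [hx, hx']
    rfl
  refine ⟨_, hA.image (BoundedContinuousFunction.toLp q μ ℝ).continuous,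
    Filter.mem_of_superset (Metric.closedBall_mem_nhds 0 one_pos) fun u hu => ?_⟩
  rw [mem_preimage, hT_eq]
  exact mem_image_of_mem _ (subset_closure (mem_image_of_mem _ hu))

end KernelOperator

section IteratedPartialIntegrals

variable {X₁ X₂ : Type*} [MeasurableSpace X₁] [MeasurableSpace X₂]
  {μ₁ : Measure X₁} {μ₂ : Measure X₂} [SFinite μ₁] [SFinite μ₂]

theorem ae_integral_fst_congr {E : Type*} [NormedAddCommGroup E] [NormedSpace ℝ E]
    {f g : X₁ × X₂ → E} (h : f =ᵐ[μ₁.prod μ₂] g) :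
    ∀ᵐ k ∂μ₁.prod μ₂, ∫ t, f (t, k.2) ∂μ₁ = ∫ t, g (t, k.2) ∂μ₁ := by
  have h_swap : ∀ᵐ k ∂μ₂.prod μ₁, f k.swap = g k.swap :=
    (Measure.measurePreserving_swap (μ := μ₂) (ν := μ₁)).quasiMeasurePreserving.ae h
  exact Measure.quasiMeasurePreserving_snd.ae
    ((Measure.ae_ae_of_ae_prod h_swap).mono fun _ hx => integral_congr_ae hx)

variable {𝕜 E W V G F : Type*} [RCLike 𝕜]
  [NormedAddCommGroup E] [NormedSpace 𝕜 E]
  [NormedAddCommGroup W] [NormedSpace 𝕜 W] [NormedSpace ℝ W] [CompleteSpace W]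
  [NormedAddCommGroup V] [NormedSpace 𝕜 V]
  [NormedAddCommGroup G] [NormedSpace 𝕜 G] [NormedSpace ℝ G] [CompleteSpace G]
  [NormedAddCommGroup F] [NormedSpace 𝕜 F] [NormedSpace ℝ F] [CompleteSpace F]

theorem integral_clm_apply_integral_snd {c : X₁ → W →L[𝕜] G} {b : X₁ × X₂ → E →L[𝕜] W}
    {u : X₁ × X₂ → E} (hbu : Integrable (fun k => b k (u k)) (μ₁.prod μ₂))
    (hcbu : Integrable (fun k => (c k.1 ∘L b k) (u k)) (μ₁.prod μ₂)) :
    ∫ t, c t (∫ t', b (t, t') (u (t, t')) ∂μ₂) ∂μ₁ = ∫ k, (c k.1 ∘L b k) (u k) ∂μ₁.prod μ₂ := by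
  rw [integral_prod _ hcbu]
  refine integral_congr_ae (hbu.prod_right_ae.mono fun t ht => ?_)
  exact ((c t).integral_comp_comm ht).symm

theorem ae_eq_integral_of_ae_eq_partialIntegrals
    {a₁ : X₁ × X₂ → G →L[𝕜] F} {b₁ : X₁ × X₂ → V →L[𝕜] G}
    {a₂ : X₁ × X₂ → W →L[𝕜] V} {b₂ : X₁ × X₂ → E →L[𝕜] W}
    {u : X₁ × X₂ → E} {v : X₁ × X₂ → V} {w : X₁ × X₂ → F}
    (hv : v =ᵐ[μ₁.prod μ₂] fun k => a₂ k (∫ t, b₂ (k.1, t) (u (k.1, t)) ∂μ₂))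
    (hw : w =ᵐ[μ₁.prod μ₂] fun k => a₁ k (∫ t, b₁ (t, k.2) (v (t, k.2)) ∂μ₁))
    (hbu : Integrable (fun k => b₂ k (u k)) (μ₁.prod μ₂))
    (hDu : ∀ x, Integrable (fun k => (b₁ (k.1, x) ∘L a₂ (k.1, x) ∘L b₂ k) (u k)) (μ₁.prod μ₂)) :
    w =ᵐ[μ₁.prod μ₂] fun k =>
      ∫ k', (a₁ k ∘L b₁ (k'.1, k.2) ∘L a₂ (k'.1, k.2) ∘L b₂ k') (u k') ∂μ₁.prod μ₂ := by
  have hbv := ae_integral_fst_congr (hv.mono fun k hk => congrArg (b₁ k) hk)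
  filter_upwards [hw, hbv] with k hwk hbvk
  rw [hwk, hbvk]
  exact (congrArg (a₁ k) (integral_clm_apply_integral_snd
    (c := fun t => b₁ (t, k.2) ∘L a₂ (t, k.2)) hbu (hDu k.2))).trans
    ((a₁ k).integral_comp_comm (hDu k.2)).symm

end IteratedPartialIntegrals

section EuclideanMatrix

open Matrix

variable {𝕜 : Type*} [RCLike 𝕜] {l m n : Type*} [Fintype l] [Fintype m] [Fintype n]

theorem EuclideanSpace.ofLp_integral {α : Type*} [MeasurableSpace α] {μ : Measure α}
    (f : α → EuclideanSpace 𝕜 n) :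
    (∫ a, f a ∂μ).ofLp = ∫ a, (f a).ofLp ∂μ :=
  ((PiLp.continuousLinearEquiv 2 𝕜 fun _ : n => 𝕜).integral_comp_comm f).symm

variable [DecidableEq l] [DecidableEq n]

def Matrix.toEuclideanCLMₗ :
    Matrix m n 𝕜 →ₗ[𝕜] EuclideanSpace 𝕜 n →L[𝕜] EuclideanSpace 𝕜 m :=
  LinearMap.toContinuousLinearMap.toLinearMap ∘ₗ Matrix.toEuclideanLin.toLinearMap

@[fun_prop]
theorem Matrix.continuous_toEuclideanCLMₗ :
    Continuous (Matrix.toEuclideanCLMₗ : Matrix m n 𝕜 → _) :=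
  LinearMap.continuous_of_finiteDimensional _

theorem Matrix.toEuclideanCLMₗ_mul (A : Matrix m n 𝕜) (B : Matrix n l 𝕜) :
    (A * B).toEuclideanCLMₗ = A.toEuclideanCLMₗ ∘L B.toEuclideanCLMₗ := by
  ext1 v
  exact congrArg (WithLp.toLp 2) (Matrix.mulVec_mulVec _ _ _).symm

theorem Matrix.toEuclideanCLMₗ_integral {α : Type*} [MeasurableSpace α] {μ : Measure α}
    (A : Matrix m n 𝕜) (B : α → Matrix n l 𝕜) (f : α → EuclideanSpace 𝕜 l) :
    A.toEuclideanCLMₗ (∫ a, (B a).toEuclideanCLMₗ (f a) ∂μ) =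
      WithLp.toLp 2 (A *ᵥ (∫ a, B a *ᵥ (f a).ofLp ∂μ)) := by
  rw [← EuclideanSpace.ofLp_integral]
  rfl

end EuclideanMatrix

theorem stmt2_general (M M₁ M₂ : ℕ)
    (A₁ : Box → Matrix (Fin M) (Fin M₁) ℂ) (B₁ : Box → Matrix (Fin M₁) (Fin M) ℂ)
    (A₂ : Box → Matrix (Fin M) (Fin M₂) ℂ) (B₂ : Box → Matrix (Fin M₂) (Fin M) ℂ)
    (hA₁ : Continuous A₁) (hB₁ : Continuous B₁) (hA₂ : Continuous A₂) (hB₂ : Continuous B₂)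
    (T₁ T₂ : HS M →L[ℂ] HS M)
    (hT₁ : ∀ u : HS M, ∀ᵐ k : Box,
      T₁ u k = toEuc M ((A₁ k).mulVec (∫ t : I01, toEuc M₁ ((B₁ (t, k.2)).mulVec (u (t, k.2))))))
    (hT₂ : ∀ u : HS M, ∀ᵐ k : Box,
      T₂ u k = toEuc M ((A₂ k).mulVec (∫ t : I01, toEuc M₂ ((B₂ (k.1, t)).mulVec (u (k.1, t)))))) :
    (∀ u : HS M, ∀ᵐ k : Box, (T₁.comp T₂) u k =
        ∫ k' : Box, toEuc M ((A₁ k * B₁ (k'.1, k.2) * A₂ (k'.1, k.2) * B₂ k').mulVec (u k')))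
    ∧ IsCompactOperator ⇑(T₁.comp T₂) := by
  let D : C(Box × Box, EucM M →L[ℂ] EucM M) :=
    ⟨fun p => (A₁ p.1).toEuclideanCLMₗ ∘L (B₁ (p.2.1, p.1.2)).toEuclideanCLMₗ ∘L
      (A₂ (p.2.1, p.1.2)).toEuclideanCLMₗ ∘L (B₂ p.2).toEuclideanCLMₗ, by fun_prop⟩
  -- The integrals in `hT₁` and `hT₂` are taken in `Fin _ → ℂ`, not in the Euclidean space.
  have h₂ : ∀ u : HS M, ⇑(T₂ u) =ᵐ[volume] fun k =>
      (A₂ k).toEuclideanCLMₗ (∫ t : I01, (B₂ (k.1, t)).toEuclideanCLMₗ (u (k.1, t))) :=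
    fun u => (hT₂ u).mono fun k hk =>
      hk.trans (Matrix.toEuclideanCLMₗ_integral (A₂ k) (fun t => B₂ (k.1, t))
        fun t => u (k.1, t)).symm
  have h₁ : ∀ v : HS M, ⇑(T₁ v) =ᵐ[volume] fun k =>
      (A₁ k).toEuclideanCLMₗ (∫ t : I01, (B₁ (t, k.2)).toEuclideanCLMₗ (v (t, k.2))) :=
    fun v => (hT₁ v).mono fun k hk =>
      hk.trans (Matrix.toEuclideanCLMₗ_integral (A₁ k) (fun t => B₁ (t, k.2))
        fun t => v (t, k.2)).symm
  have hD : ∀ u : HS M, ∀ᵐ k, (T₁.comp T₂) u k = ∫ k', D (k, k') (u k') := by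
    intro u
    have hu : Integrable u (volume.prod volume) := (Lp.memLp u).integrable one_le_two
    have hbu := hu.continuousMap_clm_apply ⟨fun k => (B₂ k).toEuclideanCLMₗ, by fun_prop⟩
    have hDu := fun x : I01 => hu.continuousMap_clm_apply
      ⟨fun k => (B₁ (k.1, x)).toEuclideanCLMₗ ∘L (A₂ (k.1, x)).toEuclideanCLMₗ ∘L
        (B₂ k).toEuclideanCLMₗ, by fun_prop⟩
    exact ae_eq_integral_of_ae_eq_partialIntegrals (μ₁ := volume) (μ₂ := volume)
      (a₁ := fun k => (A₁ k).toEuclideanCLMₗ) (b₁ := fun k => (B₁ k).toEuclideanCLMₗ)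
      (a₂ := fun k => (A₂ k).toEuclideanCLMₗ) (b₂ := fun k => (B₂ k).toEuclideanCLMₗ)
      (h₂ u) (h₁ (T₂ u)) hbu hDu
  refine ⟨fun u => (hD u).mono fun k hk =>
    hk.trans (integral_congr_ae (.of_forall fun k' => ?_)),
    isCompactOperator_of_ae_eq_integral_kernel D _ hD⟩
  simp only [D, ContinuousMap.coe_mk, ← Matrix.toEuclideanCLMₗ_mul, Matrix.mul_assoc]
  rfl

/-- The composition `(A₁⟨B₁·⟩₁) ∘ (A₂⟨B₂·⟩₂)` is the integral operator with
continuous matrix kernel `D(k,k') = A₁(k) B₁(k₁',k₂) A₂(k₁',k₂) B₂(k')`; in particular it is a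
compact operator on `H = L²([0,1]²,ℂ^M)`. -/
theorem stmt2 (M M₁ M₂ : ℕ) (hM : 0 < M) (hM₁ : 0 < M₁) (hM₂ : 0 < M₂)
    (A₁ : Box → Matrix (Fin M) (Fin M₁) ℂ) (B₁ : Box → Matrix (Fin M₁) (Fin M) ℂ)
    (A₂ : Box → Matrix (Fin M) (Fin M₂) ℂ) (B₂ : Box → Matrix (Fin M₂) (Fin M) ℂ)
    (hA₁ : Continuous A₁) (hB₁ : Continuous B₁) (hA₂ : Continuous A₂) (hB₂ : Continuous B₂)
    (T₁ T₂ : HS M →L[ℂ] HS M)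
    (hT₁ : ∀ u : HS M, ∀ᵐ k : Box,
      T₁ u k = toEuc M ((A₁ k).mulVec (∫ t : I01, toEuc M₁ ((B₁ (t, k.2)).mulVec (u (t, k.2))))))
    (hT₂ : ∀ u : HS M, ∀ᵐ k : Box,
      T₂ u k = toEuc M ((A₂ k).mulVec (∫ t : I01, toEuc M₂ ((B₂ (k.1, t)).mulVec (u (k.1, t)))))) :
    (∀ u : HS M, ∀ᵐ k : Box, (T₁.comp T₂) u k =
        ∫ k' : Box, toEuc M ((A₁ k * B₁ (k'.1, k.2) * A₂ (k'.1, k.2) * B₂ k').mulVec (u k')))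
    ∧ IsCompactOperator ⇑(T₁.comp T₂) :=
  stmt2_general M M₁ M₂ A₁ B₁ A₂ B₂ hA₁ hB₁ hA₂ hB₂ T₁ T₂ hT₁ hT₂
end
end

section
/- Let C₁ (size M×M₁) and B₁ (size M₁×M) be continuous matrix-valued functions on [0,1]², and set E₁(k₂) = I_{M₁} + ∫₀¹ B₁(t,k₂)C₁(t,k₂) dt. If E₁(k₂⁰) is singular for some k₂⁰ ∈ [0,1], then the bounded operator u ↦ u + C₁⟨B₁u⟩₁ on H = L²([0,1]², ℂ^M) is not invertible. -/
open MeasureTheory Set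

noncomputable section

/-- `E₁(k₂) = I + ∫₀¹ B₁(t,k₂) C₁(t,k₂) dt` (entrywise integral). -/
def E1c {M M₁ : ℕ} (C₁ : Box → Matrix (Fin M) (Fin M₁) ℂ)
    (B₁ : Box → Matrix (Fin M₁) (Fin M) ℂ) : I01 → Matrix (Fin M₁) (Fin M₁) ℂ :=
  fun k₂ => 1 + Matrix.of fun i j => ∫ t : I01, (B₁ (t, k₂) * C₁ (t, k₂)) i j

open Filter Topology
open scoped ENNReal NNReal Matrix

/-!
If `E₁(k₀) v = 0` with `v ≠ 0`, then `w(t) = C₁(t,k₀) v` is a nonzero solution of the fibre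
equation at `k₀`, since `w + C₁ ∫ B₁ w = C₁ E₁(k₀) v = 0`. A single fibre is a null set, so instead
take `u_J(t,k) = 𝟙_J(k) C₁(t,k) v` for small neighbourhoods `J` of `k₀`: then
`P u_J = 𝟙_J(k) C₁(t,k) E₁(k) v`, which by continuity and compactness in `t` is uniformly small
on `[0,1] × J`, while `‖u_J‖` stays comparable to `|J|^{1/2}`. So `P` is not bounded below.
-/

instance : (volume : Measure I01).IsOpenPosMeasure where
  open_pos U hU := by
    rintro ⟨x, hx⟩
    obtain ⟨O, hO, rfl⟩ := isOpen_induced_iff.mp hU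
    have hx' : (x : ℝ) ∈ closure (Ioo 0 1) := by
      rw [closure_Ioo zero_ne_one]
      exact x.2
    have hne : (O ∩ Ioo 0 1).Nonempty := mem_closure_iff.mp hx' O hO hx
    have hsub : O ∩ Ioo 0 1 ⊆ Subtype.val '' (Subtype.val ⁻¹' O : Set I01) :=
      fun y hy => ⟨⟨y, Ioo_subset_Icc_self hy.2⟩, hy.1, rfl⟩
    rw [unitInterval.volume_apply]
    exact fun h0 => (hO.inter isOpen_Ioo).measure_ne_zero volume hne (measure_mono_null hsub h0)

theorem ContinuousLinearMap.not_isUnit_of_forall_exists_enorm_apply_lt {𝕜 E : Type*}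
    [NontriviallyNormedField 𝕜] [NormedAddCommGroup E] [NormedSpace 𝕜 E] (T : E →L[𝕜] E)
    (h : ∀ ε : ℝ≥0, 0 < ε → ∃ u, ‖T u‖ₑ < ε * ‖u‖ₑ) : ¬ IsUnit T := by
  rintro ⟨T, rfl⟩
  set q := ‖(↑T⁻¹ : E →L[𝕜] E)‖₊
  obtain ⟨u, hu⟩ := h (q + 1)⁻¹ (by positivity)
  have hinv : ‖u‖ₑ ≤ q * ‖(T : E →L[𝕜] E) u‖ₑ :=
    calc ‖u‖ₑ = ‖(↑T⁻¹ : E →L[𝕜] E) ((T : E →L[𝕜] E) u)‖ₑ :=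
          congrArg _ (DFunLike.congr_fun (Units.inv_mul T) u).symm
      _ ≤ _ := ContinuousLinearMap.le_opENorm _ _
  have hq : ((q + 1)⁻¹ * q : ℝ≥0) ≤ 1 := by
    rw [inv_mul_le_iff₀ (by positivity)]
    simp
  have := calc ‖(T : E →L[𝕜] E) u‖ₑ < (q + 1)⁻¹ * ‖u‖ₑ := mod_cast hu
    _ ≤ (q + 1)⁻¹ * (q * ‖(T : E →L[𝕜] E) u‖ₑ) := by gcongr
    _ = ((q + 1)⁻¹ * q : ℝ≥0) * ‖(T : E →L[𝕜] E) u‖ₑ := by push_cast; ring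
    _ ≤ ‖(T : E →L[𝕜] E) u‖ₑ := mul_le_of_le_one_left' (mod_cast hq)
  exact this.false

theorem MeasureTheory.Measure.ae_ae_of_ae_prod_swap {α β : Type*} [MeasurableSpace α]
    [MeasurableSpace β] {μ : Measure α} {ν : Measure β} [SFinite μ] [SFinite ν]
    {p : α × β → Prop} (h : ∀ᵐ z ∂μ.prod ν, p z) : ∀ᵐ y ∂ν, ∀ᵐ x ∂μ, p (x, y) :=
  ae_ae_of_ae_prod (measurePreserving_swap.quasiMeasurePreserving.ae h)

section eLpNorm

variable {α E : Type*} [MeasurableSpace α] {μ : Measure α} [NormedAddCommGroup E] {f : α → E}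
  {s : Set α}

theorem le_eLpNorm_of_le_enorm (hs : MeasurableSet s) {c : ℝ≥0∞} (hc : ∀ x ∈ s, c ≤ ‖f x‖ₑ)
    {p : ℝ≥0∞} (hp : p ≠ 0) (hp_top : p ≠ ∞) : c * μ s ^ p.toReal⁻¹ ≤ eLpNorm f p μ := by
  rw [← one_div, ← enorm_eq_self c, ← eLpNorm_indicator_const hs hp hp_top]
  refine eLpNorm_mono_enorm fun x => ?_
  by_cases hx : x ∈ s
  · simpa [hx] using hc x hx
  · simp [hx]

theorem eLpNorm_indicator_le_of_enorm_le (hs : MeasurableSet s) {C : ℝ≥0∞}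
    (hC : ∀ x ∈ s, ‖f x‖ₑ ≤ C) (p : ℝ≥0∞) :
    eLpNorm (s.indicator f) p μ ≤ C * μ s ^ p.toReal⁻¹ := by
  rw [eLpNorm_indicator_eq_eLpNorm_restrict hs]
  refine (eLpNorm_le_of_ae_enorm_bound ((ae_restrict_iff' hs).mpr (ae_of_all _ hC))).trans_eq ?_
  rw [Measure.restrict_apply_univ, smul_eq_mul]

end eLpNorm

theorem integral_mulVec_const {X m n 𝕜 : Type*} [MeasurableSpace X] {μ : Measure X} [Fintype m]
    [Fintype n] [RCLike 𝕜] {A : X → Matrix m n 𝕜} (hA : ∀ i j, Integrable (fun x => A x i j) μ)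
    (v : n → 𝕜) : ∫ x, A x *ᵥ v ∂μ = (Matrix.of fun i j => ∫ x, A x i j ∂μ) *ᵥ v := by
  have hAv : ∀ i j, Integrable (fun x => A x i j * v j) μ := fun i j => (hA i j).mul_const _
  ext i
  rw [eval_integral (f := fun x => A x *ᵥ v) fun i => integrable_finsetSum _ fun j _ => hAv i j]
  simp only [Matrix.mulVec, dotProduct, Matrix.of_apply]
  rw [integral_finsetSum _ fun j _ => hAv i j]
  simp only [integral_mul_const]

theorem Continuous.toEuc_mulVec_const {X : Type*} [TopologicalSpace X] {m n : ℕ}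
    {A : X → Matrix (Fin m) (Fin n) ℂ} (hA : Continuous A) (v : Fin n → ℂ) :
    Continuous fun x => toEuc m (A x *ᵥ v) :=
  (PiLp.continuous_toLp 2 _).comp (hA.matrix_mulVec continuous_const)

section

variable {M M₁ : ℕ} {C₁ : Box → Matrix (Fin M) (Fin M₁) ℂ} {B₁ : Box → Matrix (Fin M₁) (Fin M) ℂ}

/-- `P` acts as `u ↦ u + C₁⟨B₁u⟩₁`; the integral is taken in `Fin M₁ → ℂ`. -/
def IsIdAddCAvgB (C₁ : Box → Matrix (Fin M) (Fin M₁) ℂ) (B₁ : Box → Matrix (Fin M₁) (Fin M) ℂ)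
    (P : HS M →L[ℂ] HS M) : Prop :=
  ∀ u : HS M, ∀ᵐ k : Box, P u k =
    u k + toEuc M ((C₁ k).mulVec (∫ t : I01, toEuc M₁ ((B₁ (t, k.2)).mulVec (u (t, k.2)))))

def slabVec (C₁ : Box → Matrix (Fin M) (Fin M₁) ℂ) (J : Set I01) (v : Fin M₁ → ℂ) :
    Box → EucM M :=
  (univ ×ˢ J).indicator fun p => toEuc M (C₁ p *ᵥ v)

theorem integral_mulVec_mulVec_eq_E1c_sub_one (hC₁ : Continuous C₁) (hB₁ : Continuous B₁)
    (k : I01) (v : Fin M₁ → ℂ) :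
    ∫ t : I01, B₁ (t, k) *ᵥ (C₁ (t, k) *ᵥ v) = (E1c C₁ B₁ k - 1) *ᵥ v := by
  have hBC : ∀ i j, Continuous fun t : I01 => (B₁ (t, k) * C₁ (t, k)) i j := by
    intro i j
    fun_prop
  simp_rw [Matrix.mulVec_mulVec]
  rw [integral_mulVec_const fun i j => (hBC i j).integrable_of_hasCompactSupport
    (.of_compactSpace _), E1c, add_sub_cancel_left]

theorem continuous_E1c (hC₁ : Continuous C₁) (hB₁ : Continuous B₁) : Continuous (E1c C₁ B₁) := by
  refine continuous_const.add (continuous_matrix fun i j => ?_)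
  have := continuous_parametric_integral_of_continuous (μ := volume)
    (f := fun (k t : I01) => (B₁ (t, k) * C₁ (t, k)) i j) (by fun_prop) isCompact_univ
  simpa only [Measure.restrict_univ, Matrix.of_apply] using this

theorem memLp_slabVec (hC₁ : Continuous C₁) {J : Set I01} (hJ : MeasurableSet J)
    (v : Fin M₁ → ℂ) : MemLp (slabVec C₁ J v) 2 volume :=
  ((hC₁.toEuc_mulVec_const v).memLp_of_hasCompactSupport (.of_compactSpace _)).indicator
    (MeasurableSet.univ.prod hJ)

theorem apply_toLp_slabVec_ae_eq (hC₁ : Continuous C₁) (hB₁ : Continuous B₁)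
    {P : HS M →L[ℂ] HS M} (hP : IsIdAddCAvgB C₁ B₁ P) (J : Set I01) (v : Fin M₁ → ℂ)
    (hf : MemLp (slabVec C₁ J v) 2 volume) :
    P (hf.toLp _) =ᵐ[volume]
      (univ ×ˢ J).indicator fun p => toEuc M (C₁ p *ᵥ (E1c C₁ B₁ p.2 *ᵥ v)) := by
  have hu := hf.coeFn_toLp
  -- `hP` integrates `u` along sections `t ↦ u (t, k)`; for a.e. `k` these agree a.e. with `slabVec`
  have hsec : ∀ᵐ p : Box, ∀ᵐ t : I01, _ :=
    Measure.quasiMeasurePreserving_snd.ae (Measure.ae_ae_of_ae_prod_swap hu)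
  filter_upwards [hP (hf.toLp _), hu, hsec] with p hPp hup hsecp
  have hint : ∫ t : I01, (toEuc M₁ (B₁ (t, p.2) *ᵥ (hf.toLp _ (t, p.2)).ofLp)).ofLp
      = J.indicator (fun k => (E1c C₁ B₁ k - 1) *ᵥ v) p.2 := by
    rw [integral_congr_ae (hsecp.mono fun t ht =>
      congrArg (fun w => (toEuc M₁ (B₁ (t, p.2) *ᵥ w.ofLp)).ofLp) ht)]
    by_cases hp : p.2 ∈ J
    · simp [slabVec, hp, ← integral_mulVec_mulVec_eq_E1c_sub_one hC₁ hB₁]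
    · simp [slabVec, hp]
  rw [hPp, hup, hint]
  by_cases hp : p.2 ∈ J
  · simp [slabVec, hp, toEuc, Matrix.sub_mulVec, Matrix.mulVec_sub]
  · simp [slabVec, hp, toEuc]

theorem enorm_apply_toLp_slabVec_le (hC₁ : Continuous C₁) (hB₁ : Continuous B₁)
    {P : HS M →L[ℂ] HS M} (hP : IsIdAddCAvgB C₁ B₁ P) {J : Set I01} (hJ : MeasurableSet J)
    {v : Fin M₁ → ℂ} {δ : ℝ≥0∞}
    (hδ : ∀ t, ∀ k ∈ J, ‖toEuc M (C₁ (t, k) *ᵥ (E1c C₁ B₁ k *ᵥ v))‖ₑ ≤ δ)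
    (hf : MemLp (slabVec C₁ J v) 2 volume) :
    ‖P (hf.toLp _)‖ₑ ≤ δ * volume J ^ (2 : ℝ)⁻¹ := by
  rw [Lp.enorm_def, eLpNorm_congr_ae (apply_toLp_slabVec_ae_eq hC₁ hB₁ hP J v hf)]
  refine (eLpNorm_indicator_le_of_enorm_le (MeasurableSet.univ.prod hJ)
    (fun p hp => hδ p.1 p.2 hp.2) 2).trans_eq ?_
  rw [Measure.volume_eq_prod, Measure.prod_prod, measure_univ, one_mul, ENNReal.toReal_ofNat]

theorem le_enorm_toLp_slabVec {J U : Set I01} (hJ : MeasurableSet J) (hU : MeasurableSet U)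
    {v : Fin M₁ → ℂ} {c : ℝ≥0∞} (hc : ∀ t ∈ U, ∀ k ∈ J, c ≤ ‖toEuc M (C₁ (t, k) *ᵥ v)‖ₑ)
    (hf : MemLp (slabVec C₁ J v) 2 volume) :
    c * volume U ^ (2 : ℝ)⁻¹ * volume J ^ (2 : ℝ)⁻¹ ≤ ‖hf.toLp _‖ₑ := by
  rw [Lp.enorm_def, eLpNorm_congr_ae hf.coeFn_toLp]
  calc c * volume U ^ (2 : ℝ)⁻¹ * volume J ^ (2 : ℝ)⁻¹
      = c * volume (U ×ˢ J) ^ (2 : ℝ≥0∞).toReal⁻¹ := by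
        rw [Measure.volume_eq_prod, Measure.prod_prod,
          ENNReal.mul_rpow_of_nonneg _ _ (by norm_num), mul_assoc, ENNReal.toReal_ofNat]
    _ ≤ _ := le_eLpNorm_of_le_enorm (hU.prod hJ) (fun p hp => by
        rw [slabVec, indicator_of_mem (mem_prod.mpr ⟨mem_univ _, hp.2⟩)]
        exact hc p.1 hp.1 p.2 hp.2) two_ne_zero ENNReal.ofNat_ne_top

theorem eventually_forall_enorm_mulVec_E1c_mulVec_lt (hC₁ : Continuous C₁)
    (hB₁ : Continuous B₁) {k₀ : I01} {v : Fin M₁ → ℂ} (hv : E1c C₁ B₁ k₀ *ᵥ v = 0) {δ : ℝ≥0∞}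
    (hδ : 0 < δ) : ∀ᶠ k in 𝓝 k₀, ∀ t ∈ univ, ‖toEuc M (C₁ (t, k) *ᵥ (E1c C₁ B₁ k *ᵥ v))‖ₑ < δ := by
  refine isCompact_univ.eventually_forall_of_forall_eventually fun t _ => ?_
  have hG : Continuous fun z : I01 × I01 => ‖toEuc M (C₁ (z.2, z.1) *ᵥ (E1c C₁ B₁ z.1 *ᵥ v))‖ₑ :=
    ((PiLp.continuous_toLp 2 _).comp ((hC₁.comp continuous_swap).matrix_mulVec
      (((continuous_E1c hC₁ hB₁).comp continuous_fst).matrix_mulVec continuous_const))).enorm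
  refine (isOpen_lt hG continuous_const).mem_nhds ?_
  show ‖toEuc M (C₁ (t, k₀) *ᵥ (E1c C₁ B₁ k₀ *ᵥ v))‖ₑ < δ
  simpa [hv, toEuc] using hδ

theorem exists_enorm_apply_lt (hC₁ : Continuous C₁) (hB₁ : Continuous B₁)
    {P : HS M →L[ℂ] HS M} (hP : IsIdAddCAvgB C₁ B₁ P)
    {k₀ : I01} {v : Fin M₁ → ℂ} (hv : E1c C₁ B₁ k₀ *ᵥ v = 0) {t₀ : I01}
    (ht₀ : C₁ (t₀, k₀) *ᵥ v ≠ 0) (ε : ℝ≥0) (hε : 0 < ε) : ∃ u, ‖P u‖ₑ < ε * ‖u‖ₑ := by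
  obtain ⟨c, hc0, hc⟩ := exists_between
    (enorm_pos.mpr (by simpa [toEuc] using ht₀) : 0 < ‖toEuc M (C₁ (t₀, k₀) *ᵥ v)‖ₑ)
  obtain ⟨U, V, hU, ht₀U, hV, hk₀V, hUV⟩ := mem_nhds_prod_iff'.mp
    ((isOpen_lt continuous_const (hC₁.toEuc_mulVec_const v).enorm).mem_nhds hc)
  set a := c * volume U ^ (2 : ℝ)⁻¹
  have ha : 0 < a :=
    ENNReal.mul_pos hc0.ne'
      (ENNReal.rpow_pos (hU.measure_pos _ ⟨t₀, ht₀U⟩) (measure_ne_top _ _)).ne'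
  obtain ⟨δ, hδ0, hδ⟩ := exists_between (ENNReal.mul_pos (ENNReal.coe_ne_zero.mpr hε.ne') ha.ne')
  obtain ⟨J, hJ, hJo, hk₀J⟩ := eventually_nhds_iff.mp
    ((eventually_forall_enorm_mulVec_E1c_mulVec_lt hC₁ hB₁ hv hδ0).and (hV.mem_nhds hk₀V))
  have hf := memLp_slabVec hC₁ hJo.measurableSet v
  have hJpos : 0 < volume J := hJo.measure_pos _ ⟨k₀, hk₀J⟩
  refine ⟨hf.toLp _, ?_⟩
  calc ‖P (hf.toLp _)‖ₑ ≤ δ * volume J ^ (2 : ℝ)⁻¹ :=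
        enorm_apply_toLp_slabVec_le hC₁ hB₁ hP hJo.measurableSet
          (fun t k hk => ((hJ k hk).1 t trivial).le) hf
    _ < ε * a * volume J ^ (2 : ℝ)⁻¹ :=
      ENNReal.mul_lt_mul_left (ENNReal.rpow_pos hJpos (measure_ne_top _ _)).ne'
        (ENNReal.rpow_ne_top_of_nonneg (by norm_num) (measure_ne_top _ _)) hδ
    _ ≤ ε * ‖hf.toLp _‖ₑ := by
      rw [mul_assoc]
      gcongr
      exact le_enorm_toLp_slabVec hJo.measurableSet hU.measurableSet
        (fun t ht k hk => (hUV (mk_mem_prod ht (hJ k hk).2)).le) hf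

end

theorem stmt6_general (M M₁ : ℕ)
    (C₁ : Box → Matrix (Fin M) (Fin M₁) ℂ) (B₁ : Box → Matrix (Fin M₁) (Fin M) ℂ)
    (hC₁ : Continuous C₁) (hB₁ : Continuous B₁)
    (hsing : ∃ k₂0 : I01, ¬ IsUnit (E1c C₁ B₁ k₂0))
    (P : HS M →L[ℂ] HS M)
    (hP : ∀ u : HS M, ∀ᵐ k : Box, P u k =
      u k + toEuc M ((C₁ k).mulVec (∫ t : I01, toEuc M₁ ((B₁ (t, k.2)).mulVec (u (t, k.2)))))) :
    ¬ IsUnit P := by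
  obtain ⟨k₀, hk₀⟩ := hsing
  obtain ⟨v, hv0, hv⟩ := Matrix.exists_mulVec_eq_zero_iff.mpr
    (by rwa [Matrix.isUnit_iff_isUnit_det, isUnit_iff_ne_zero, not_not] at hk₀)
  obtain ⟨t₀, ht₀⟩ : ∃ t₀, C₁ (t₀, k₀) *ᵥ v ≠ 0 := by
    by_contra! h
    -- otherwise `(E₁(k₀) - 1) v = ∫ B₁ C₁ v = 0`, i.e. `v = 0`
    have hEv := integral_mulVec_mulVec_eq_E1c_sub_one hC₁ hB₁ k₀ v
    exact hv0 (by simpa [h, Matrix.sub_mulVec, hv] using hEv)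
  exact P.not_isUnit_of_forall_exists_enorm_apply_lt (exists_enorm_apply_lt hC₁ hB₁ hP hv ht₀)

/-- If `E₁(k₂⁰)` is singular for some `k₂⁰ ∈ [0,1]`, then the operator
`u ↦ u + C₁⟨B₁u⟩₁` on `H = L²([0,1]²,ℂ^M)` is not invertible. -/
theorem stmt6 (M M₁ : ℕ) (hM : 0 < M) (hM₁ : 0 < M₁)
    (C₁ : Box → Matrix (Fin M) (Fin M₁) ℂ) (B₁ : Box → Matrix (Fin M₁) (Fin M) ℂ)
    (hC₁ : Continuous C₁) (hB₁ : Continuous B₁)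
    (hsing : ∃ k₂0 : I01, ¬ IsUnit (E1c C₁ B₁ k₂0))
    (P : HS M →L[ℂ] HS M)
    (hP : ∀ u : HS M, ∀ᵐ k : Box, P u k =
      u k + toEuc M ((C₁ k).mulVec (∫ t : I01, toEuc M₁ ((B₁ (t, k.2)).mulVec (u (t, k.2)))))) :
    ¬ IsUnit P :=
  stmt6_general M M₁ C₁ B₁ hC₁ hB₁ hsing P hP
end
end
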